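/- For every complex number s with Re(s) > 1, the family over primes p of the factors (1 - p^(-(s+1))) / (1 - p^(-s)) is multipliable, and (∫_ℝ (1 + x^2)^(-(s+1)/2) dx) · ∏_{p prime} (1 - p^(-(s+1))) / (1 - p^(-s)) = Λ(s) / Λ(s+1), where Λ is the completed Riemann zeta function. (This is the Euler-product form of the paper's theorem for G = SL₂ over ℚ with trivial unramified character: the global intertwining operator value on the spherical vector is the product over all places of the local Gindikin–Karpelevich factors, and equals Λ(s)/Λ(s+1).) -/

import Mathlib

/-!
The finite places contribute the ratio of the Euler products of `ζ(s)` and `ζ(s + 1)`. At the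
real place, the substitution `t = x² / (1 + x²)` turns `∫_ℝ (1 + x²)^(-w) dx` into the Beta
integral `B(1/2, w - 1/2) = √π Γ(w - 1/2) / Γ(w)`, which for `w = (s + 1)/2` is exactly
`Γ_ℝ(s) / Γ_ℝ(s + 1)`. Since `Λ = Γ_ℝ · ζ` for `Re s > 0`, the product is `Λ(s) / Λ(s + 1)`.
-/

open Complex MeasureTheory Real Set

theorem strictMonoOn_sq_div_one_add_sq :
    StrictMonoOn (fun x : ℝ => x ^ 2 / (1 + x ^ 2)) (Ioi 0) := by
  intro a (ha : 0 < a) b _ hab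
  simp only
  rw [div_lt_div_iff₀ (by positivity) (by positivity)]
  nlinarith

theorem image_sq_div_one_add_sq_Ioi :
    (fun x : ℝ => x ^ 2 / (1 + x ^ 2)) '' Ioi 0 = Ioo 0 1 := by
  ext t
  constructor
  · rintro ⟨x, hx : 0 < x, rfl⟩
    exact ⟨by positivity, (div_lt_one (by positivity)).mpr (by linarith)⟩
  · rintro ⟨ht0, ht1⟩
    have hq : 0 < t / (1 - t) := div_pos ht0 (by linarith)
    refine ⟨√(t / (1 - t)), sqrt_pos.mpr hq, ?_⟩
    simp only [sq_sqrt hq.le]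
    field_simp
    ring

theorem hasDerivAt_sq_div_one_add_sq (x : ℝ) :
    HasDerivAt (fun x : ℝ => x ^ 2 / (1 + x ^ 2)) (2 * x / (1 + x ^ 2) ^ 2) x := by
  refine ((hasDerivAt_pow 2 x).div ((hasDerivAt_pow 2 x).const_add 1)
    (by positivity)).congr_deriv ?_
  field_simp
  ring

theorem abs_deriv_smul_betaIntegrand_sq_div_one_add_sq (w : ℂ) {x : ℝ} (hx : 0 < x) :
    |2 * x / (1 + x ^ 2) ^ 2| •
        (((x ^ 2 / (1 + x ^ 2) : ℝ) : ℂ) ^ ((1 : ℂ) / 2 - 1) *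
          (1 - ((x ^ 2 / (1 + x ^ 2) : ℝ) : ℂ)) ^ (w - 1 / 2 - 1)) =
      2 * ((1 + x ^ 2 : ℝ) : ℂ) ^ (-w) := by
  set a : ℝ := 1 + x ^ 2
  have ha : 0 < a := by positivity
  have haC : (a : ℂ) ≠ 0 := ofReal_ne_zero.mpr ha.ne'
  have hxC : (x : ℂ) ≠ 0 := ofReal_ne_zero.mpr hx.ne'
  have harg : (a : ℂ).arg ≠ π := by rw [arg_ofReal_of_nonneg ha.le]; exact pi_ne_zero.symm
  have hfirst :
      ((x ^ 2 / a : ℝ) : ℂ) ^ ((1 : ℂ) / 2 - 1) = (x : ℂ)⁻¹ * (a : ℂ) ^ (1 / 2 : ℂ) := by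
    have hreal : (x ^ 2 / a) ^ (-(1 / 2) : ℝ) = x⁻¹ * a ^ (1 / 2 : ℝ) := by
      rw [rpow_neg (by positivity), div_rpow (sq_nonneg x) ha.le, ← sqrt_eq_rpow (x ^ 2),
        sqrt_sq hx.le, inv_div, div_eq_inv_mul]
    rw [show (1 : ℂ) / 2 - 1 = ((-(1 / 2) : ℝ) : ℂ) by push_cast; ring,
      ← ofReal_cpow (by positivity), hreal, ofReal_mul, ofReal_cpow ha.le]
    norm_num
  have hsecond : (1 - ((x ^ 2 / a : ℝ) : ℂ)) ^ (w - 1 / 2 - 1) = (a : ℂ) ^ (3 / 2 - w) := by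
    have : (1 : ℂ) - ((x ^ 2 / a : ℝ) : ℂ) = (a : ℂ)⁻¹ := by
      rw [← ofReal_one, ← ofReal_sub, ← ofReal_inv]; congr 1; field_simp; ring
    rw [this, inv_cpow _ _ harg, ← cpow_neg]; ring_nf
  have hsplit :
      (a : ℂ) ^ (1 / 2 : ℂ) * (a : ℂ) ^ (3 / 2 - w) = (a : ℂ) ^ 2 * (a : ℂ) ^ (-w) := by
    rw [← cpow_add _ _ haC, ← cpow_two, ← cpow_add _ _ haC]; ring_nf
  rw [hfirst, hsecond, abs_of_pos (by positivity), real_smul, mul_assoc, hsplit]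
  push_cast
  field_simp

theorem betaIntegral_one_half_eq_integral_Ioi (w : ℂ) :
    betaIntegral (1 / 2) (w - 1 / 2) =
      2 * ∫ x in Ioi (0 : ℝ), ((1 + x ^ 2 : ℝ) : ℂ) ^ (-w) := by
  rw [betaIntegral, intervalIntegral.integral_of_le zero_le_one, integral_Ioc_eq_integral_Ioo,
    ← image_sq_div_one_add_sq_Ioi,
    integral_image_eq_integral_abs_deriv_smul measurableSet_Ioi
      (fun x _ => (hasDerivAt_sq_div_one_add_sq x).hasDerivWithinAt)
      strictMonoOn_sq_div_one_add_sq.injOn,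
    setIntegral_congr_fun measurableSet_Ioi
      (fun x hx => abs_deriv_smul_betaIntegrand_sq_div_one_add_sq w hx),
    integral_const_mul]

theorem integrable_one_add_sq_cpow_neg {w : ℂ} (hw : 1 / 2 < w.re) :
    Integrable (fun x : ℝ => ((1 + x ^ 2 : ℝ) : ℂ) ^ (-w)) := by
  have hcont : Continuous (fun x : ℝ => ((1 + x ^ 2 : ℝ) : ℂ) ^ (-w)) :=
    (continuous_ofReal.comp (by fun_prop)).cpow continuous_const
      (fun x => ofReal_mem_slitPlane.mpr (by positivity))
  refine (integrable_rpow_neg_one_add_norm_sq (E := ℝ) (r := 2 * w.re) (by simp; linarith)).mono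
    hcont.aestronglyMeasurable (Filter.Eventually.of_forall fun x => ?_)
  rw [norm_cpow_eq_rpow_re_of_pos (by positivity), norm_of_nonneg (by positivity), norm_eq_abs,
    sq_abs, neg_re, neg_div, mul_div_cancel_left₀ _ two_ne_zero]

theorem integral_one_add_sq_cpow_neg {w : ℂ} (hw : 1 / 2 < w.re) :
    ∫ x : ℝ, ((1 + x ^ 2 : ℝ) : ℂ) ^ (-w) =
      (π : ℂ) ^ (1 / 2 : ℂ) * Complex.Gamma (w - 1 / 2) / Complex.Gamma w := by
  have hint := integrable_one_add_sq_cpow_neg hw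
  have heven : ∫ x in Iic (0 : ℝ), ((1 + x ^ 2 : ℝ) : ℂ) ^ (-w) =
      ∫ x in Ioi (0 : ℝ), ((1 + x ^ 2 : ℝ) : ℂ) ^ (-w) := by
    have := integral_comp_neg_Ioi 0 fun x : ℝ => ((1 + x ^ 2 : ℝ) : ℂ) ^ (-w)
    simp only [neg_zero, neg_sq] at this
    exact this.symm
  have hbeta := Gamma_mul_Gamma_eq_betaIntegral (s := 1 / 2) (t := w - 1 / 2) (by norm_num)
    (by simp; linarith)
  rw [add_sub_cancel, Complex.Gamma_one_half_eq] at hbeta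
  rw [← intervalIntegral.integral_Iic_add_Ioi hint.integrableOn hint.integrableOn, heven,
    eq_div_iff (Gamma_ne_zero_of_re_pos (by linarith)), hbeta,
    betaIntegral_one_half_eq_integral_Ioi]
  ring

theorem Gammaℝ_div_Gammaℝ_add_one (s : ℂ) :
    Gammaℝ s / Gammaℝ (s + 1) =
      (π : ℂ) ^ (1 / 2 : ℂ) * Complex.Gamma (s / 2) / Complex.Gamma ((s + 1) / 2) := by
  have hπ : (π : ℂ) ≠ 0 := ofReal_ne_zero.mpr pi_ne_zero
  have hpow : (π : ℂ) ^ (-s / 2) = (π : ℂ) ^ (1 / 2 : ℂ) * (π : ℂ) ^ (-(s + 1) / 2) := by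
    rw [← cpow_add _ _ hπ]; ring_nf
  rw [Gammaℝ_def, Gammaℝ_def, hpow, mul_right_comm, mul_comm ((π : ℂ) ^ (-(s + 1) / 2)),
    mul_div_mul_right _ _ (cpow_ne_zero_iff.mpr (Or.inl hπ))]

theorem integral_one_add_sq_cpow_neg_add_one_div_two {s : ℂ} (hs : 0 < s.re) :
    ∫ x : ℝ, ((1 + x ^ 2 : ℝ) : ℂ) ^ (-(s + 1) / 2) = Gammaℝ s / Gammaℝ (s + 1) := by
  have hw : 1 / 2 < ((s + 1) / 2).re := by simp; linarith
  rw [neg_div, integral_one_add_sq_cpow_neg hw, show (s + 1) / 2 - 1 / 2 = s / 2 by ring,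
    Gammaℝ_div_Gammaℝ_add_one]

theorem riemannZeta_div_eulerProduct_hasProd {s t : ℂ} (hs : 1 < s.re) (ht : 1 < t.re) :
    HasProd (fun p : Nat.Primes => (1 - ((p : ℕ) : ℂ) ^ (-t)) / (1 - ((p : ℕ) : ℂ) ^ (-s)))
      (riemannZeta s / riemannZeta t) := by
  simpa only [inv_div_inv] using (riemannZeta_eulerProduct_hasProd hs).div₀
    (riemannZeta_eulerProduct_hasProd ht) (riemannZeta_ne_zero_of_one_lt_re ht)

theorem completedRiemannZeta_eq_Gammaℝ_mul_riemannZeta {s : ℂ} (hs : 0 < s.re) :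
    completedRiemannZeta s = Gammaℝ s * riemannZeta s := by
  rw [riemannZeta_def_of_ne_zero (ne_zero_of_re_pos hs),
    mul_div_cancel₀ _ (Gammaℝ_ne_zero_of_re_pos hs)]

/-- Euler-product form of the paper's theorem for `G = SL₂` over `ℚ` with trivial unramified
character: for `Re s > 1`, the family of local factors `(1 - p^(-(s+1)))/(1 - p^(-s))` over
primes `p` is multipliable and
`(∫_ℝ (1 + x²)^(-(s+1)/2) dx) · ∏_p (1 - p^(-(s+1)))/(1 - p^(-s)) = Λ(s)/Λ(s+1)`. -/
theorem sl2_global_intertwining_spherical_euler_product (s : ℂ) (hs : 1 < s.re) :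
    Multipliable (fun p : Nat.Primes =>
      (1 - ((p : ℕ) : ℂ) ^ (-(s + 1))) / (1 - ((p : ℕ) : ℂ) ^ (-s))) ∧
      (∫ x : ℝ, ((1 + x ^ 2 : ℝ) : ℂ) ^ (-(s + 1) / 2)) *
          (∏' p : Nat.Primes, (1 - ((p : ℕ) : ℂ) ^ (-(s + 1))) / (1 - ((p : ℕ) : ℂ) ^ (-s))) =
        completedRiemannZeta s / completedRiemannZeta (s + 1) := by
  have hs1 : 1 < (s + 1).re := by simp; linarith
  have hprod := riemannZeta_div_eulerProduct_hasProd hs hs1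
  refine ⟨hprod.multipliable, ?_⟩
  rw [hprod.tprod_eq, integral_one_add_sq_cpow_neg_add_one_div_two (by linarith),
    completedRiemannZeta_eq_Gammaℝ_mul_riemannZeta (by linarith),
    completedRiemannZeta_eq_Gammaℝ_mul_riemannZeta (by linarith), mul_div_mul_comm]
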